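/- arXiv:2601.21147 — 2 statements merged into one kernel-verified Lean document; each statement's English description precedes it below -/
import Mathlib

section
/- Consider the dynamic cutoff c_v as a function of the position x_t of a single neighbor t, with all other atoms fixed, where c_v = (Σ_{u∈N} ω(R_u)p(r_u/h)r_u + hε)/(Σ_{u∈N} ω(R_u)p(r_u/h) + ε), R_u = Σ_{s≠u} S(α(r_u - r_s))p(r_s/h). If r_t = h (neighbor t is exactly at the hard cutoff), then the gradient of c_v with respect to x_t vanishes: ∇_{x_t} c_v = 0. -/
/-!
The envelope `p` vanishes to second order at the hard cutoff: `p(1) = p'(1) = 0`. Hence, when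
`r_t = h`, the factor `p(r_t / h)` is flat at `x_t`: it vanishes together with its gradient, and so
does its product with any function merely continuous there. The position `x_t` enters the
soft ranks `R_u` (`u ≠ t`) and the weight of `t` only through such products, so numerator and
denominator of `c_v` are both stationary at `x_t`, while the denominator is at least `ε > 0`
because `p`, decreasing on `[0, ∞)`, is nonnegative on `[0, 1]`.
-/

open Real

/-- The logistic sigmoid `S(x) = 1/(1 + e^{-x})`. -/
noncomputable def sigmoid : ℝ → ℝ := fun x => 1 / (1 + Real.exp (-x))

/-- The polynomial envelope `p(x) = 1 - ((n+1)(n+2)/2)xⁿ + n(n+2)xⁿ⁺¹ - (n(n+1)/2)xⁿ⁺²`. -/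
noncomputable def polyEnvelope (n : ℕ) : ℝ → ℝ := fun x =>
  1 - ((n + 1) * (n + 2) / 2) * x ^ n + (n * (n + 2)) * x ^ (n + 1)
    - (n * (n + 1) / 2) * x ^ (n + 2)

/-- The Gaussian weighting function (normal PDF with mean `μ` and std `σ`). -/
noncomputable def gaussWeight (μ σ : ℝ) : ℝ → ℝ := fun x =>
  (1 / (σ * Real.sqrt (2 * π))) * Real.exp (-(1 / 2) * ((x - μ) / σ) ^ 2)

variable {ι : Type*} [DecidableEq ι]

/-- Distance of neighbor `u` from the center atom `xv`, where the position of the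
distinguished neighbor `t` is the variable `xt` and all other positions are given by `pos`. -/
noncomputable def nbrDist (d : ℕ) (t : ι) (pos : ι → EuclideanSpace ℝ (Fin d))
    (xv : EuclideanSpace ℝ (Fin d)) (xt : EuclideanSpace ℝ (Fin d)) (u : ι) : ℝ :=
  if u = t then ‖xt - xv‖ else ‖pos u - xv‖

/-- The soft rank `R_u` of neighbor `u`, as a function of the position `xt` of neighbor `t`. -/
noncomputable def softRank (d : ℕ) (N : Finset ι) (t : ι) (pos : ι → EuclideanSpace ℝ (Fin d))
    (xv : EuclideanSpace ℝ (Fin d)) (α h : ℝ) (n : ℕ)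
    (xt : EuclideanSpace ℝ (Fin d)) (u : ι) : ℝ :=
  ∑ s ∈ N.erase u, _root_.sigmoid (α * (nbrDist d t pos xv xt u - nbrDist d t pos xv xt s)) *
    polyEnvelope n (nbrDist d t pos xv xt s / h)

/-- The dynamic cutoff `c_v`, as a function of the position `xt` of neighbor `t`. -/
noncomputable def dynCutoff (d : ℕ) (N : Finset ι) (t : ι) (pos : ι → EuclideanSpace ℝ (Fin d))
    (xv : EuclideanSpace ℝ (Fin d)) (α h ε μ σ : ℝ) (n : ℕ)
    (xt : EuclideanSpace ℝ (Fin d)) : ℝ :=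
  (∑ u ∈ N, gaussWeight μ σ (softRank d N t pos xv α h n xt u) *
      polyEnvelope n (nbrDist d t pos xv xt u / h) * nbrDist d t pos xv xt u + h * ε) /
  (∑ u ∈ N, gaussWeight μ σ (softRank d N t pos xv α h n xt u) *
      polyEnvelope n (nbrDist d t pos xv xt u / h) + ε)

section FlatZero

variable {E : Type*} [NormedAddCommGroup E] [NormedSpace ℝ E] {f g : E → ℝ} {x : E}

def HasFlatZeroAt (g : E → ℝ) (x : E) : Prop := g x = 0 ∧ HasFDerivAt g (0 : E →L[ℝ] ℝ) x

theorem HasFlatZeroAt.continuousAt_mul (hg : HasFlatZeroAt g x) (hf : ContinuousAt f x) :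
    HasFlatZeroAt (fun y => f y * g y) x := by
  obtain ⟨hgx, hg'⟩ := hg
  have hsmall : g =o[nhds x] fun y => y - x := by simpa [hgx] using hg'.isLittleO
  refine ⟨by simp [hgx], .of_isLittleO ?_⟩
  simpa [hgx] using (hf.tendsto.isBigO_one ℝ).smul_isLittleO hsmall

theorem HasFlatZeroAt.mul_continuousAt (hg : HasFlatZeroAt g x) (hf : ContinuousAt f x) :
    HasFlatZeroAt (fun y => g y * f y) x := by
  simpa only [mul_comm] using hg.continuousAt_mul hf

theorem HasFlatZeroAt.comp_of_hasDerivAt_zero {φ : ℝ → ℝ} {r : E → ℝ}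
    (hφ : HasDerivAt φ 0 (r x)) (hφx : φ (r x) = 0) (hr : DifferentiableAt ℝ r x) :
    HasFlatZeroAt (fun y => φ (r y)) x :=
  ⟨hφx, by simpa [Function.comp_def] using hφ.comp_hasFDerivAt x hr.hasFDerivAt⟩

theorem HasFDerivAt.div_of_fderiv_zero (hf : HasFDerivAt f (0 : E →L[ℝ] ℝ) x)
    (hg : HasFDerivAt g (0 : E →L[ℝ] ℝ) x) (hgx : g x ≠ 0) :
    HasFDerivAt (fun y => f y / g y) (0 : E →L[ℝ] ℝ) x := by
  simpa [div_eq_mul_inv, Function.comp_def] using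
    hf.fun_mul ((hasDerivAt_inv hgx).comp_hasFDerivAt x hg)

end FlatZero

theorem polyEnvelope_one (n : ℕ) : polyEnvelope n 1 = 0 := by
  simp only [polyEnvelope, one_pow, mul_one]
  ring

theorem hasDerivAt_polyEnvelope (n : ℕ) (x : ℝ) :
    HasDerivAt (polyEnvelope n) (-(n * (n + 1) * (n + 2) / 2 * x ^ (n - 1) * (1 - x) ^ 2)) x := by
  refine (((((hasDerivAt_pow n x).const_mul _).const_sub 1).fun_add
    ((hasDerivAt_pow (n + 1) x).const_mul _)).fun_sub
    ((hasDerivAt_pow (n + 2) x).const_mul _)).congr_deriv ?_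
  rcases n with _ | k
  · simp
  · push_cast [Nat.add_sub_cancel]
    ring

theorem hasDerivAt_polyEnvelope_one (n : ℕ) : HasDerivAt (polyEnvelope n) 0 1 := by
  simpa using hasDerivAt_polyEnvelope n 1

theorem differentiable_polyEnvelope (n : ℕ) : Differentiable ℝ (polyEnvelope n) :=
  fun x => (hasDerivAt_polyEnvelope n x).differentiableAt

theorem antitoneOn_polyEnvelope (n : ℕ) : AntitoneOn (polyEnvelope n) (Set.Ici 0) := by
  refine antitoneOn_of_hasDerivWithinAt_nonpos (convex_Ici 0)
    (differentiable_polyEnvelope n).continuous.continuousOn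
    (fun x _ => (hasDerivAt_polyEnvelope n x).hasDerivWithinAt) fun x hx => ?_
  rw [interior_Ici] at hx
  have : 0 ≤ (n : ℝ) * (n + 1) * (n + 2) / 2 * x ^ (n - 1) * (1 - x) ^ 2 := by
    have := hx.out.le
    positivity
  linarith

theorem polyEnvelope_nonneg (n : ℕ) {x : ℝ} (hx₀ : 0 ≤ x) (hx₁ : x ≤ 1) :
    0 ≤ polyEnvelope n x := by
  simpa [polyEnvelope_one] using antitoneOn_polyEnvelope n hx₀ (Set.mem_Ici.2 zero_le_one) hx₁

theorem gaussWeight_nonneg (μ : ℝ) {σ : ℝ} (hσ : 0 ≤ σ) (x : ℝ) : 0 ≤ gaussWeight μ σ x := by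
  unfold gaussWeight
  positivity

theorem differentiable_gaussWeight (μ σ : ℝ) : Differentiable ℝ (gaussWeight μ σ) := by
  unfold gaussWeight
  fun_prop

theorem sigmoid_eq_real_sigmoid : _root_.sigmoid = Real.sigmoid := by
  ext x
  simp [_root_.sigmoid, Real.sigmoid_def]

noncomputable def nbrWeight (d : ℕ) (N : Finset ι) (t : ι) (pos : ι → EuclideanSpace ℝ (Fin d))
    (xv : EuclideanSpace ℝ (Fin d)) (α h μ σ : ℝ) (n : ℕ) (xt : EuclideanSpace ℝ (Fin d))
    (u : ι) : ℝ :=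
  gaussWeight μ σ (softRank d N t pos xv α h n xt u) * polyEnvelope n (nbrDist d t pos xv xt u / h)

section Cutoff

variable {d : ℕ} {N : Finset ι} {t : ι} {pos : ι → EuclideanSpace ℝ (Fin d)}
  {xv : EuclideanSpace ℝ (Fin d)} {α h ε μ σ : ℝ} {n : ℕ}

@[simp]
theorem nbrDist_self {xt : EuclideanSpace ℝ (Fin d)} : nbrDist d t pos xv xt t = ‖xt - xv‖ :=
  if_pos rfl

theorem nbrDist_of_ne {xt : EuclideanSpace ℝ (Fin d)} {u : ι} (hu : u ≠ t) :
    nbrDist d t pos xv xt u = ‖pos u - xv‖ :=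
  if_neg hu

theorem continuous_nbrDist (u : ι) : Continuous fun xt => nbrDist d t pos xv xt u := by
  unfold nbrDist
  split_ifs <;> fun_prop

theorem continuous_softRank (u : ι) : Continuous fun xt => softRank d N t pos xv α h n xt u := by
  have := continuous_nbrDist (t := t) (pos := pos) (xv := xv)
  have := (differentiable_polyEnvelope n).continuous
  unfold softRank
  rw [sigmoid_eq_real_sigmoid]
  fun_prop

theorem dynCutoff_eq_div : dynCutoff d N t pos xv α h ε μ σ n = fun xt =>
    (∑ u ∈ N, nbrWeight d N t pos xv α h μ σ n xt u * nbrDist d t pos xv xt u + h * ε) /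
      (∑ u ∈ N, nbrWeight d N t pos xv α h μ σ n xt u + ε) :=
  rfl

theorem nbrWeight_nonneg (hσ : 0 ≤ σ) (hh : 0 < h) {xt : EuclideanSpace ℝ (Fin d)}
    {u : ι} (hu : nbrDist d t pos xv xt u ∈ Set.Icc 0 h) :
    0 ≤ nbrWeight d N t pos xv α h μ σ n xt u :=
  mul_nonneg (gaussWeight_nonneg μ hσ _) <| polyEnvelope_nonneg n (div_nonneg hu.1 hh.le)
    ((div_le_one hh).2 hu.2)

variable {xt₀ : EuclideanSpace ℝ (Fin d)}

theorem hasFlatZeroAt_polyEnvelope_nbrDist_self (hxt : xt₀ ≠ xv) (hrt : ‖xt₀ - xv‖ = h)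
    (hh : h ≠ 0) : HasFlatZeroAt (fun xt => polyEnvelope n (nbrDist d t pos xv xt t / h)) xt₀ := by
  have hr : ‖xt₀ - xv‖ / h = 1 := by rw [hrt, div_self hh]
  simp only [nbrDist_self]
  refine HasFlatZeroAt.comp_of_hasDerivAt_zero ?_ ?_ ?_
  · rw [hr]; exact hasDerivAt_polyEnvelope_one n
  · rw [hr]; exact polyEnvelope_one n
  · simpa only [div_eq_mul_inv, id_eq] using
      ((differentiableAt_id.sub_const xv).norm ℝ (sub_ne_zero.2 hxt)).mul_const h⁻¹

variable (hflat : HasFlatZeroAt (fun xt => polyEnvelope n (nbrDist d t pos xv xt t / h)) xt₀)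
include hflat

theorem hasFDerivAt_softRank_of_ne {u : ι} (hu : u ≠ t) :
    HasFDerivAt (fun xt => softRank d N t pos xv α h n xt u) (0 : _ →L[ℝ] ℝ) xt₀ := by
  have hterm (s : ι) : HasFDerivAt
      (fun xt => _root_.sigmoid (α * (nbrDist d t pos xv xt u - nbrDist d t pos xv xt s)) *
        polyEnvelope n (nbrDist d t pos xv xt s / h)) (0 : _ →L[ℝ] ℝ) xt₀ := by
    rcases eq_or_ne s t with rfl | hs
    · refine (hflat.continuousAt_mul ?_).2
      have := continuous_nbrDist (t := s) (pos := pos) (xv := xv)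
      rw [sigmoid_eq_real_sigmoid]
      fun_prop
    · simp only [nbrDist_of_ne hu, nbrDist_of_ne hs]
      exact hasFDerivAt_const _ _
  simpa [softRank] using HasFDerivAt.fun_sum fun s (_ : s ∈ N.erase u) => hterm s

theorem hasFlatZeroAt_nbrWeight_self :
    HasFlatZeroAt (fun xt => nbrWeight d N t pos xv α h μ σ n xt t) xt₀ :=
  hflat.continuousAt_mul
    ((differentiable_gaussWeight μ σ).continuous.comp (continuous_softRank t)).continuousAt

theorem hasFDerivAt_nbrWeight_of_ne {u : ι} (hu : u ≠ t) :
    HasFDerivAt (fun xt => nbrWeight d N t pos xv α h μ σ n xt u) (0 : _ →L[ℝ] ℝ) xt₀ := by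
  simp only [nbrWeight, nbrDist_of_ne hu]
  simpa [Function.comp_def] using
    ((differentiable_gaussWeight μ σ _).hasDerivAt.comp_hasFDerivAt xt₀
      (hasFDerivAt_softRank_of_ne hflat hu)).mul_const (polyEnvelope n (‖pos u - xv‖ / h))

theorem hasFDerivAt_nbrWeight (u : ι) :
    HasFDerivAt (fun xt => nbrWeight d N t pos xv α h μ σ n xt u) (0 : _ →L[ℝ] ℝ) xt₀ := by
  rcases eq_or_ne u t with rfl | hu
  · exact (hasFlatZeroAt_nbrWeight_self hflat).2
  · exact hasFDerivAt_nbrWeight_of_ne hflat hu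

theorem hasFDerivAt_nbrWeight_mul_nbrDist (u : ι) :
    HasFDerivAt (fun xt => nbrWeight d N t pos xv α h μ σ n xt u * nbrDist d t pos xv xt u)
      (0 : _ →L[ℝ] ℝ) xt₀ := by
  rcases eq_or_ne u t with rfl | hu
  · exact ((hasFlatZeroAt_nbrWeight_self hflat).mul_continuousAt
      (continuous_nbrDist u).continuousAt).2
  · simp only [nbrDist_of_ne hu]
    simpa using (hasFDerivAt_nbrWeight_of_ne hflat hu).mul_const ‖pos u - xv‖

theorem hasFDerivAt_dynCutoff
    (hden : ∑ u ∈ N, nbrWeight d N t pos xv α h μ σ n xt₀ u + ε ≠ 0) :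
    HasFDerivAt (dynCutoff d N t pos xv α h ε μ σ n) (0 : _ →L[ℝ] ℝ) xt₀ := by
  have hnum := (HasFDerivAt.fun_sum fun u (_ : u ∈ N) =>
    hasFDerivAt_nbrWeight_mul_nbrDist (N := N) (α := α) (μ := μ) (σ := σ) hflat u).add_const (h * ε)
  have hdenom := (HasFDerivAt.fun_sum fun u (_ : u ∈ N) =>
    hasFDerivAt_nbrWeight (N := N) (α := α) (μ := μ) (σ := σ) hflat u).add_const ε
  rw [Finset.sum_const_zero] at hnum hdenom
  rw [dynCutoff_eq_div]
  exact hnum.div_of_fderiv_zero hdenom hden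

end Cutoff

theorem dynCutoff_grad_vanishes_at_hard_cutoff_general (d : ℕ) (N : Finset ι) (t : ι)
    (pos : ι → EuclideanSpace ℝ (Fin d)) (xv : EuclideanSpace ℝ (Fin d))
    (α h ε μ σ : ℝ) (n : ℕ) (hh : 0 < h) (hε : 0 < ε) (hσ : 0 < σ)
    (hpos : ∀ u ∈ N, u ≠ t → ‖pos u - xv‖ ∈ Set.Icc (0 : ℝ) h)
    (xt₀ : EuclideanSpace ℝ (Fin d)) (hxt : xt₀ ≠ xv) (hrt : ‖xt₀ - xv‖ = h) :
    fderiv ℝ (dynCutoff d N t pos xv α h ε μ σ n) xt₀ = 0 := by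
  have hdist (u : ι) (hu : u ∈ N) : nbrDist d t pos xv xt₀ u ∈ Set.Icc 0 h := by
    rcases eq_or_ne u t with rfl | hut
    · simp [hrt, hh.le]
    · rw [nbrDist_of_ne hut]
      exact hpos u hu hut
  have hden : 0 < ∑ u ∈ N, nbrWeight d N t pos xv α h μ σ n xt₀ u + ε :=
    add_pos_of_nonneg_of_pos
      (Finset.sum_nonneg fun u hu => nbrWeight_nonneg hσ.le hh (hdist u hu)) hε
  exact (hasFDerivAt_dynCutoff (hasFlatZeroAt_polyEnvelope_nbrDist_self hxt hrt hh.ne')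
    hden.ne').fderiv

theorem dynCutoff_grad_vanishes_at_hard_cutoff (d : ℕ) (N : Finset ι) (t : ι) (ht : t ∈ N)
    (pos : ι → EuclideanSpace ℝ (Fin d)) (xv : EuclideanSpace ℝ (Fin d))
    (α h ε μ σ : ℝ) (n : ℕ) (hn : 3 ≤ n) (hα : 0 < α) (hh : 0 < h) (hε : 0 < ε) (hσ : 0 < σ)
    (hpos : ∀ u ∈ N, u ≠ t → ‖pos u - xv‖ ∈ Set.Icc (0 : ℝ) h)
    (xt₀ : EuclideanSpace ℝ (Fin d)) (hxt : xt₀ ≠ xv) (hrt : ‖xt₀ - xv‖ = h) :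
    fderiv ℝ (dynCutoff d N t pos xv α h ε μ σ n) xt₀ = 0 :=
  dynCutoff_grad_vanishes_at_hard_cutoff_general d N t pos xv α h ε μ σ n hh hε hσ hpos xt₀ hxt hrt
end

section
/- Let g : ℝ^d → ℝ be defined piecewise as g(x) = F(x) if φ(x) ≤ 0 and g(x) = G(x) if φ(x) > 0, where F, G, φ are C² and on the boundary set {φ = 0} one has F = G, ∇F = ∇G, and Hess F = Hess G. Assume additionally 0 is a regular value of φ. Then g is C² on ℝ^d. -/
/-!
Away from the frontier of `{φ ≤ 0}`, which lies in `{φ = 0}`, the glued function `g` locally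
coincides with `F` or with `G`. At a frontier point `F` and `G` agree to first order, and the
first-order remainder of `g` is pointwise one of the remainders of `F` and `G`, so `g` has the
common derivative there. Thus `fderiv g` is again `fderiv F` glued with `fderiv G`; the same
argument one order higher, with the agreement of the Hessians, makes `fderiv (fderiv g)` a gluing
of continuous functions that agree on the frontier, hence continuous.
-/

open Set Filter Asymptotics Topology

section Piecewise

variable {E V : Type*} [NormedAddCommGroup E] [NormedSpace ℝ E]
  [NormedAddCommGroup V] [NormedSpace ℝ V]
  {s : Set E} [∀ x, Decidable (x ∈ s)] {f g : E → V} {f' : E →L[ℝ] V} {x : E}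

theorem HasFDerivAt.piecewise (hf : HasFDerivAt f f' x) (hg : HasFDerivAt g f' x)
    (hfg : f x = g x) : HasFDerivAt (s.piecewise f g) f' x := by
  rw [hasFDerivAt_iff_isLittleO] at *
  refine IsBigO.trans_isLittleO
    (g := fun y => ‖f y - f x - f' (y - x)‖ + ‖g y - g x - f' (y - x)‖)
    (isBigO_of_le _ fun y => ?_) (hf.norm_left.add hg.norm_left)
  rw [Real.norm_of_nonneg (by positivity)]
  by_cases hy : y ∈ s <;> by_cases hx : x ∈ s <;>
    simp only [piecewise_eq_of_mem, piecewise_eq_of_notMem, hy, hx, hfg, not_false_eq_true] <;>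
    linarith [norm_nonneg (f y - g x - f' (y - x)), norm_nonneg (g y - g x - f' (y - x))]

theorem hasFDerivAt_piecewise_of_eqOn_frontier (hf : DifferentiableAt ℝ f x)
    (hg : DifferentiableAt ℝ g x) (h₀ : EqOn f g (frontier s))
    (h₁ : EqOn (fderiv ℝ f) (fderiv ℝ g) (frontier s)) :
    HasFDerivAt (s.piecewise f g) (s.piecewise (fderiv ℝ f) (fderiv ℝ g) x) x := by
  by_cases hint : x ∈ interior s
  · rw [piecewise_eq_of_mem _ _ _ (interior_subset hint)]
    exact hf.hasFDerivAt.congr_of_eventuallyEq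
      ((piecewise_eqOn s f g).eventuallyEq_of_mem (mem_interior_iff_mem_nhds.1 hint))
  by_cases hext : x ∈ interior sᶜ
  · rw [piecewise_eq_of_notMem _ _ _ (interior_subset hext)]
    exact hg.hasFDerivAt.congr_of_eventuallyEq
      ((piecewise_eqOn_compl s f g).eventuallyEq_of_mem (mem_interior_iff_mem_nhds.1 hext))
  have hx : x ∈ frontier s := ⟨by simpa [interior_compl] using hext, hint⟩
  rw [show s.piecewise (fderiv ℝ f) (fderiv ℝ g) x = fderiv ℝ f x by
    by_cases hxs : x ∈ s <;> simp [hxs, h₁ hx]]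
  exact hf.hasFDerivAt.piecewise (h₁ hx ▸ hg.hasFDerivAt) (h₀ hx)

theorem fderiv_piecewise_of_eqOn_frontier (hf : Differentiable ℝ f) (hg : Differentiable ℝ g)
    (h₀ : EqOn f g (frontier s)) (h₁ : EqOn (fderiv ℝ f) (fderiv ℝ g) (frontier s)) :
    fderiv ℝ (s.piecewise f g) = s.piecewise (fderiv ℝ f) (fderiv ℝ g) :=
  funext fun x => (hasFDerivAt_piecewise_of_eqOn_frontier (hf x) (hg x) h₀ h₁).fderiv

theorem Differentiable.piecewise_of_eqOn_frontier (hf : Differentiable ℝ f)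
    (hg : Differentiable ℝ g) (h₀ : EqOn f g (frontier s))
    (h₁ : EqOn (fderiv ℝ f) (fderiv ℝ g) (frontier s)) :
    Differentiable ℝ (s.piecewise f g) := fun x =>
  (hasFDerivAt_piecewise_of_eqOn_frontier (hf x) (hg x) h₀ h₁).differentiableAt

theorem ContDiff.piecewise_of_eqOn_frontier_one (hf : ContDiff ℝ 1 f) (hg : ContDiff ℝ 1 g)
    (h₀ : EqOn f g (frontier s)) (h₁ : EqOn (fderiv ℝ f) (fderiv ℝ g) (frontier s)) :
    ContDiff ℝ 1 (s.piecewise f g) := by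
  rw [contDiff_one_iff_fderiv] at *
  refine ⟨hf.1.piecewise_of_eqOn_frontier hg.1 h₀ h₁, ?_⟩
  rw [fderiv_piecewise_of_eqOn_frontier hf.1 hg.1 h₀ h₁]
  exact hf.2.piecewise h₁ hg.2

theorem ContDiff.piecewise_of_eqOn_frontier_two (hf : ContDiff ℝ 2 f) (hg : ContDiff ℝ 2 g)
    (h₀ : EqOn f g (frontier s)) (h₁ : EqOn (fderiv ℝ f) (fderiv ℝ g) (frontier s))
    (h₂ : EqOn (fderiv ℝ (fderiv ℝ f)) (fderiv ℝ (fderiv ℝ g)) (frontier s)) :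
    ContDiff ℝ 2 (s.piecewise f g) := by
  rw [show (2 : WithTop ℕ∞) = 1 + 1 from rfl, contDiff_succ_iff_fderiv] at *
  refine ⟨hf.1.piecewise_of_eqOn_frontier hg.1 h₀ h₁, by simp, ?_⟩
  rw [fderiv_piecewise_of_eqOn_frontier hf.1 hg.1 h₀ h₁]
  exact hf.2.2.piecewise_of_eqOn_frontier_one hg.2.2 h₁ h₂

end Piecewise

theorem piecewise_gluing_C2_general (d : ℕ) (F G φ : (Fin d → ℝ) → ℝ)
    (hF : ContDiff ℝ 2 F) (hG : ContDiff ℝ 2 G) (hφ : ContDiff ℝ 2 φ)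
    (hval : ∀ x, φ x = 0 → F x = G x)
    (hgrad : ∀ x, φ x = 0 → fderiv ℝ F x = fderiv ℝ G x)
    (hhess : ∀ x, φ x = 0 → fderiv ℝ (fderiv ℝ F) x = fderiv ℝ (fderiv ℝ G) x) :
    ContDiff ℝ 2 (fun x => if φ x ≤ 0 then F x else G x) := by
  have hfrontier : frontier {x | φ x ≤ 0} ⊆ {x | φ x = 0} :=
    frontier_le_subset_eq hφ.continuous continuous_const
  exact hF.piecewise_of_eqOn_frontier_two (s := {x | φ x ≤ 0}) hG
    (fun x hx => hval x (hfrontier hx)) (fun x hx => hgrad x (hfrontier hx))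
    (fun x hx => hhess x (hfrontier hx))

theorem piecewise_gluing_C2 (d : ℕ) (F G φ : (Fin d → ℝ) → ℝ)
    (hF : ContDiff ℝ 2 F) (hG : ContDiff ℝ 2 G) (hφ : ContDiff ℝ 2 φ)
    (hval : ∀ x, φ x = 0 → F x = G x)
    (hgrad : ∀ x, φ x = 0 → fderiv ℝ F x = fderiv ℝ G x)
    (hhess : ∀ x, φ x = 0 → fderiv ℝ (fderiv ℝ F) x = fderiv ℝ (fderiv ℝ G) x)
    (hreg : ∀ x, φ x = 0 → fderiv ℝ φ x ≠ 0) :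
    ContDiff ℝ 2 (fun x => if φ x ≤ 0 then F x else G x) :=
  piecewise_gluing_C2_general d F G φ hF hG hφ hval hgrad hhess
end
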